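/- For real numbers a ≥ b > 0, the integral over t ∈ [0,1] of log(a + b·cos(2πt)) dt equals log((a + sqrt(a² − b²))/2). -/

import Mathlib

/-!
On the unit circle, `a + b Re z = ‖m z + n‖²` with `m, n = (√(a + b) ± √(a - b)) / 2`, since
`m² + n² = a` and `2 m n = b`. The integral is the circle average of `log (a + b Re z)`, hence
twice that of `log ‖m z + n‖`. As `|n| ≤ m`, the zero `-n / m` lies in the closed unit disc, so
by Jensen's formula this average is `log m`, and `m² = (a + √(a² - b²)) / 2`.
-/

open Real

theorem circleAverage_log_norm_mul_add {m : ℝ} {n : ℂ} (h : ‖n‖ ≤ |m|) :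
    circleAverage (fun z ↦ log ‖m * z + n‖) 0 1 = log m := by
  have hn : -n ∈ Metric.closedBall (0 : ℂ) |m| := by simpa using h
  simpa [sub_neg_eq_add, circleAverage_eq_circleAverage_zero_one] using
    circleAverage_log_norm_sub_const_of_mem_closedBall hn

theorem circleAverage_zero_one_eq_integral {E : Type*} [NormedAddCommGroup E] [NormedSpace ℝ E]
    (f : ℂ → E) :
    circleAverage f 0 1 = ∫ t in (0:ℝ)..1, f (circleMap 0 1 (2 * π * t)) := by
  rw [intervalIntegral.integral_comp_mul_left (fun θ ↦ f (circleMap 0 1 θ)) (by positivity),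
    mul_zero, mul_one, circleAverage_def]

theorem Complex.sq_norm_ofReal_mul_add_ofReal {z : ℂ} (hz : ‖z‖ = 1) (m n : ℝ) :
    ‖m * z + n‖ ^ 2 = m ^ 2 + n ^ 2 + 2 * m * n * z.re := by
  have hz2 := Complex.sq_norm z
  rw [hz, Complex.normSq_apply] at hz2
  rw [Complex.sq_norm, Complex.normSq_apply]
  simp only [Complex.add_re, Complex.add_im, Complex.mul_re, Complex.mul_im, Complex.ofReal_re,
    Complex.ofReal_im]
  linear_combination -m ^ 2 * hz2

theorem integral_log_add_mul_cos {a b : ℝ} (h : |b| ≤ a) :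
    ∫ t in (0:ℝ)..1, log (a + b * cos (2 * π * t)) = log ((a + √(a ^ 2 - b ^ 2)) / 2) := by
  obtain ⟨hplus, hminus⟩ : 0 ≤ a + b ∧ 0 ≤ a - b := by constructor <;> linarith [abs_le.mp h]
  set x := √(a + b)
  set y := √(a - b)
  have hx : x ^ 2 = a + b := sq_sqrt hplus
  have hy : y ^ 2 = a - b := sq_sqrt hminus
  have hxy : x * y = √(a ^ 2 - b ^ 2) := by
    rw [← sqrt_mul hplus]
    ring_nf
  set m := (x + y) / 2 with hm
  set n := (x - y) / 2 with hn
  have hnm : ‖(n : ℂ)‖ ≤ |m| := by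
    have : 0 ≤ x := sqrt_nonneg _
    have : 0 ≤ y := sqrt_nonneg _
    rw [Complex.norm_real, norm_eq_abs]
    exact abs_le_abs (by linarith) (by linarith)
  calc ∫ t in (0:ℝ)..1, log (a + b * cos (2 * π * t))
      = circleAverage (fun z ↦ log (a + b * z.re)) 0 1 := by
        simp [circleAverage_zero_one_eq_integral, circleMap_zero_re]
    _ = circleAverage (fun z ↦ log (‖m * z + n‖ ^ 2)) 0 1 := by
        refine circleAverage_congr_sphere fun z hz ↦ ?_
        rw [abs_one, mem_sphere_zero_iff_norm] at hz
        rw [Complex.sq_norm_ofReal_mul_add_ofReal hz]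
        congr 1
        linear_combination (-(1 + z.re) / 2) * hx + ((z.re - 1) / 2) * hy
    _ = log (m ^ 2) := by
        simp only [log_pow, Nat.cast_ofNat, ← smul_eq_mul (a := (2:ℝ)), circleAverage_fun_smul,
          circleAverage_log_norm_mul_add hnm]
    _ = log ((a + √(a ^ 2 - b ^ 2)) / 2) := by
        congr 1
        linear_combination 1 / 4 * hx + 1 / 4 * hy + 1 / 2 * hxy

theorem stmt_0 (a b : ℝ) (hab : a ≥ b) (hb : 0 < b) :
    ∫ t in (0:ℝ)..1, Real.log (a + b * Real.cos (2 * π * t)) =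
      Real.log ((a + Real.sqrt (a ^ 2 - b ^ 2)) / 2) :=
  integral_log_add_mul_cos (abs_le.mpr ⟨by linarith, hab⟩)
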